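/- Let X = { (i,ℓ,s) : ℓ ∈ L, s ∈ S_ℓ, i ∈ I_ℓ } be partitioned into pairwise disjoint subsets X₁,…,X_K with union X, and fix 1 ≤ k ≤ K. In Model M_k, suppose every setup cost c^S_{ijℓ} is strictly positive, every setup time e_{ijℓ} is nonnegative, and all fixed values x̂^w_{iℓs} (w < k) are binary. Then for every subperiod s of a machine ℓ and products i, j ∈ I_ℓ such that both (i,ℓ,s−1) and (j,ℓ,s) belong to X₁ ∪ … ∪ X_k, every optimal solution of Model M_k satisfies y_{ijℓs} = max(0, x_{iℓ,s−1} + x_{jℓs} − 1) ∈ {0,1}; that is, the changeover variable y_{ijℓs} is guaranteed to assume a binary value at any optimum of Model M_k whenever both of the linked setup-state variables are fixed binary or constrained binary in Model M_k. -/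

import Mathlib

open Finset

/-- Data of Model M: the MILP for lot sizing and scheduling on unrelated
parallel machines (GLSPPL).  Products are `Fin n`, machines are `Fin m`,
periods are `Fin T`.  Machine `ℓ` has `W ℓ` subperiods; the subperiod
`s : Fin (W ℓ)` represents the paper's subperiod `s+1`, and `period ℓ s`
is the period `t` with `s ∈ S_{ℓ t}`; monotonicity of `period ℓ` expresses
that the blocks `S_{ℓ t}` are consecutive. -/
structure GLSP where
  n : ℕ
  m : ℕ
  T : ℕ
  W : Fin m → ℕ
  /-- `prods ℓ` is the set `I_ℓ` of products machine `ℓ` can produce. -/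
  prods : Fin m → Finset (Fin n)
  period : (ℓ : Fin m) → Fin (W ℓ) → Fin T
  periodMono : ∀ ℓ, Monotone (period ℓ)
  d : Fin n → Fin T → ℝ
  hcost : Fin n → ℝ
  g : Fin n → ℝ
  p : Fin n → Fin m → ℝ
  cP : Fin n → Fin m → ℝ
  qlb : Fin n → Fin m → ℝ
  e : Fin n → Fin n → Fin m → ℝ
  cS : Fin n → Fin n → Fin m → ℝ
  CW : ℝ
  cap : Fin m → Fin T → ℝ
  I0p : Fin n → ℝ
  I0m : Fin n → ℝ
  x0 : Fin n → Fin m → ℝ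
  d_nonneg : ∀ i t, 0 ≤ d i t
  hcost_nonneg : ∀ i, 0 ≤ hcost i
  g_nonneg : ∀ i, 0 ≤ g i
  p_nonneg : ∀ i ℓ, 0 ≤ p i ℓ
  cP_nonneg : ∀ i ℓ, 0 ≤ cP i ℓ
  qlb_nonneg : ∀ i ℓ, 0 ≤ qlb i ℓ
  CW_nonneg : 0 ≤ CW
  cap_nonneg : ∀ ℓ t, 0 ≤ cap ℓ t
  I0p_nonneg : ∀ i, 0 ≤ I0p i
  I0m_nonneg : ∀ i, 0 ≤ I0m i
  x0_binary : ∀ i ℓ, x0 i ℓ = 0 ∨ x0 i ℓ = 1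

/-- Variables of Model M.  `x i ℓ t` is the setup state `x_{iℓt}` for
`t = 0, 1, …, W ℓ` (`t = 0` is the initial state); the subperiod
`s : Fin (W ℓ)` corresponds to the paper's subperiod `s+1`, whose
setup state at its beginning is `x i ℓ s.val` and at its end is
`x i ℓ (s.val+1)`.  `Ip i t`/`Im i t` are inventory/backorder at
instant `t = 0, 1, …, T`. -/
structure Sol (P : GLSP) where
  q : Fin P.n → (ℓ : Fin P.m) → Fin (P.W ℓ) → ℝ
  x : Fin P.n → (ℓ : Fin P.m) → ℕ → ℝ
  y : Fin P.n → Fin P.n → (ℓ : Fin P.m) → Fin (P.W ℓ) → ℝ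
  Ip : Fin P.n → ℕ → ℝ
  Im : Fin P.n → ℕ → ℝ

/-- All constraints of Model M except the binary requirement on the
setup-state variables `x`. -/
def Feasible (P : GLSP) (σ : Sol P) : Prop :=
  -- initial conditions
  (∀ ℓ, ∀ i ∈ P.prods ℓ, σ.x i ℓ 0 = P.x0 i ℓ) ∧
  (∀ i, σ.Ip i 0 = P.I0p i) ∧
  (∀ i, σ.Im i 0 = P.I0m i) ∧
  -- inventory balance
  (∀ i, ∀ t : Fin P.T,
    σ.Ip i t.val - σ.Im i t.val
      + (∑ ℓ, ∑ s : Fin (P.W ℓ),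
          if i ∈ P.prods ℓ ∧ P.period ℓ s = t then σ.q i ℓ s else 0)
      - σ.Ip i (t.val + 1) + σ.Im i (t.val + 1) = P.d i t) ∧
  -- warehouse capacity
  (∀ t : Fin P.T, (∑ i, σ.Ip i (t.val + 1)) ≤ P.CW) ∧
  -- machine capacity
  (∀ ℓ, ∀ t : Fin P.T,
    (∑ i ∈ P.prods ℓ, ∑ s : Fin (P.W ℓ),
      if P.period ℓ s = t then
        P.p i ℓ * σ.q i ℓ s + ∑ j ∈ P.prods ℓ, P.e i j ℓ * σ.y i j ℓ s
      else 0) ≤ P.cap ℓ t) ∧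
  -- production linking
  (∀ ℓ, ∀ i ∈ P.prods ℓ, ∀ s : Fin (P.W ℓ),
    P.p i ℓ * σ.q i ℓ s ≤ P.cap ℓ (P.period ℓ s) * σ.x i ℓ (s.val + 1)) ∧
  -- minimum lot size
  (∀ ℓ, ∀ i ∈ P.prods ℓ, ∀ s : Fin (P.W ℓ),
    σ.q i ℓ s ≥ P.qlb i ℓ * (σ.x i ℓ (s.val + 1) - σ.x i ℓ s.val)) ∧
  -- unique setup state
  (∀ ℓ, ∀ s : Fin (P.W ℓ), (∑ i ∈ P.prods ℓ, σ.x i ℓ (s.val + 1)) = 1) ∧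
  -- changeover linking
  (∀ ℓ, ∀ s : Fin (P.W ℓ), ∀ i ∈ P.prods ℓ, ∀ j ∈ P.prods ℓ,
    σ.y i j ℓ s ≥ σ.x i ℓ s.val + σ.x j ℓ (s.val + 1) - 1) ∧
  -- nonnegativity
  (∀ ℓ, ∀ i ∈ P.prods ℓ, ∀ s : Fin (P.W ℓ), 0 ≤ σ.q i ℓ s) ∧
  (∀ ℓ, ∀ s : Fin (P.W ℓ), ∀ i ∈ P.prods ℓ, ∀ j ∈ P.prods ℓ, 0 ≤ σ.y i j ℓ s) ∧
  (∀ i, ∀ t : Fin P.T, 0 ≤ σ.Ip i (t.val + 1) ∧ 0 ≤ σ.Im i (t.val + 1))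

/-- The objective of Model M: inventory + backorder + setup + production cost. -/
def objective (P : GLSP) (σ : Sol P) : ℝ :=
  (∑ i, ∑ t : Fin P.T, P.hcost i * σ.Ip i (t.val + 1))
  + (∑ i, ∑ t : Fin P.T, P.g i * σ.Im i (t.val + 1))
  + (∑ ℓ, ∑ i ∈ P.prods ℓ, ∑ j ∈ P.prods ℓ, ∑ s : Fin (P.W ℓ),
      P.cS i j ℓ * σ.y i j ℓ s)
  + (∑ ℓ, ∑ i ∈ P.prods ℓ, ∑ s : Fin (P.W ℓ), P.cP i ℓ * σ.q i ℓ s)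

/-- The setup-state variables are binary (constraint (10) of Model M). -/
def BinaryX (P : GLSP) (σ : Sol P) : Prop :=
  ∀ ℓ, ∀ i ∈ P.prods ℓ, ∀ s : Fin (P.W ℓ),
    σ.x i ℓ (s.val + 1) = 0 ∨ σ.x i ℓ (s.val + 1) = 1

/-- Feasibility for Model M. -/
def FeasibleM (P : GLSP) (σ : Sol P) : Prop :=
  Feasible P σ ∧ BinaryX P σ

/-- Optimality for Model M. -/
def OptimalM (P : GLSP) (σ : Sol P) : Prop :=
  FeasibleM P σ ∧ ∀ τ, FeasibleM P τ → objective P σ ≤ objective P τ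

/-- Feasibility for the relax-and-fix subproblem Model M_k, where the index
set `X = {(i,ℓ,s) : ℓ ∈ L, s ∈ S_ℓ, i ∈ I_ℓ}` is partitioned into the subsets
`Xp 0, …, Xp (K-1)` (encoded as predicates `Xp k ℓ s i`), and `xhat w` carries
the given fixed values `x̂^w` for the indices in `X_w`, `w < k`: variables
with indices in `X_w` for `w < k` are fixed to `(xhat w).x`, variables with
indices in `X_k` are constrained binary, and variables with indices in `X_w`
for `w > k` are relaxed to `[0,1]`. -/
def FeasibleMk (P : GLSP) (K : ℕ)
    (Xp : Fin K → (ℓ : Fin P.m) → Fin (P.W ℓ) → Fin P.n → Prop)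
    (xhat : Fin K → Sol P) (k : Fin K) (σ : Sol P) : Prop :=
  Feasible P σ ∧
  (∀ w, w < k → ∀ ℓ, ∀ s : Fin (P.W ℓ), ∀ i ∈ P.prods ℓ, Xp w ℓ s i →
    σ.x i ℓ (s.val + 1) = (xhat w).x i ℓ (s.val + 1)) ∧
  (∀ ℓ, ∀ s : Fin (P.W ℓ), ∀ i ∈ P.prods ℓ, Xp k ℓ s i →
    (σ.x i ℓ (s.val + 1) = 0 ∨ σ.x i ℓ (s.val + 1) = 1)) ∧
  (∀ w, k < w → ∀ ℓ, ∀ s : Fin (P.W ℓ), ∀ i ∈ P.prods ℓ, Xp w ℓ s i →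
    0 ≤ σ.x i ℓ (s.val + 1) ∧ σ.x i ℓ (s.val + 1) ≤ 1)

/-- Optimality for the relax-and-fix subproblem Model M_k. -/
def OptimalMk (P : GLSP) (K : ℕ)
    (Xp : Fin K → (ℓ : Fin P.m) → Fin (P.W ℓ) → Fin P.n → Prop)
    (xhat : Fin K → Sol P) (k : Fin K) (σ : Sol P) : Prop :=
  FeasibleMk P K Xp xhat k σ ∧
  ∀ τ, FeasibleMk P K Xp xhat k τ → objective P σ ≤ objective P τ

/-!
An optimal solution never pays more setup cost than the changeover constraints force: replacing
every changeover variable `y_{ijℓs}` by its lower bound `max 0 (x_{iℓ,s-1} + x_{jℓs} - 1)` keeps all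
constraints (the setup times are nonnegative, so machine capacity only gets slacker) and, since the
setup costs are positive, strictly lowers the objective unless nothing changed. Hence `y` equals
this bound at any optimum, and the bound is binary as soon as the two setup states are: in
Model M_k those are either fixed to binary values or constrained binary.
-/

section Changeover

variable {P : GLSP} {K : ℕ} {Xp : Fin K → (l : Fin P.m) → Fin (P.W l) → Fin P.n → Prop}
  {xhat : Fin K → Sol P} {k : Fin K} {σ : Sol P}

abbrev ChangeoverVars (P : GLSP) : Type := Fin P.n → Fin P.n → (l : Fin P.m) → Fin (P.W l) → ℝ

def changeoverLB (σ : Sol P) (a b : Fin P.n) (l : Fin P.m) (t : Fin (P.W l)) : ℝ :=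
  max 0 (σ.x a l t.val + σ.x b l (t.val + 1) - 1)

def Sol.withY (σ : Sol P) (y : ChangeoverVars P) : Sol P :=
  { σ with y := y }

def setupCost (P : GLSP) (y : ChangeoverVars P) : ℝ :=
  ∑ l, ∑ a ∈ P.prods l, ∑ b ∈ P.prods l, ∑ t : Fin (P.W l), P.cS a b l * y a b l t

theorem Feasible.changeoverLB_le (hσ : Feasible P σ) {l : Fin P.m} (t : Fin (P.W l))
    {a b : Fin P.n} (ha : a ∈ P.prods l) (hb : b ∈ P.prods l) :
    changeoverLB σ a b l t ≤ σ.y a b l t := by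
  obtain ⟨-, -, -, -, -, -, -, -, -, hchg, -, hynn, -⟩ := hσ
  exact max_le (hynn l t a ha b hb) (hchg l t a ha b hb)

theorem Feasible.withY {y : ChangeoverVars P}
    (hσ : Feasible P σ) (he : ∀ l, ∀ a ∈ P.prods l, ∀ b ∈ P.prods l, 0 ≤ P.e a b l)
    (hle : ∀ l t, ∀ a ∈ P.prods l, ∀ b ∈ P.prods l, y a b l t ≤ σ.y a b l t)
    (hlb : ∀ l t, ∀ a ∈ P.prods l, ∀ b ∈ P.prods l, changeoverLB σ a b l t ≤ y a b l t) :
    Feasible P (σ.withY y) := by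
  obtain ⟨hx0, hI0p, hI0m, hbal, hware, hcap, hlink, hmin, huniq, -, hqnn, -, hInn⟩ := hσ
  refine ⟨hx0, hI0p, hI0m, hbal, hware, fun l t => le_trans ?_ (hcap l t), hlink, hmin, huniq,
    fun l t a ha b hb => le_trans (le_max_right _ _) (hlb l t a ha b hb), hqnn,
    fun l t a ha b hb => le_trans (le_max_left _ _) (hlb l t a ha b hb), hInn⟩
  gcongr with a ha u _
  split_ifs
  · exact add_le_add_right (sum_le_sum fun b hb =>
      mul_le_mul_of_nonneg_left (hle l u a ha b hb) (he l a ha b hb)) _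
  · exact le_rfl

theorem FeasibleMk.withY {y : ChangeoverVars P}
    (hσ : FeasibleMk P K Xp xhat k σ) (he : ∀ l, ∀ a ∈ P.prods l, ∀ b ∈ P.prods l, 0 ≤ P.e a b l)
    (hle : ∀ l t, ∀ a ∈ P.prods l, ∀ b ∈ P.prods l, y a b l t ≤ σ.y a b l t)
    (hlb : ∀ l t, ∀ a ∈ P.prods l, ∀ b ∈ P.prods l, changeoverLB σ a b l t ≤ y a b l t) :
    FeasibleMk P K Xp xhat k (σ.withY y) :=
  ⟨hσ.1.withY he hle hlb, hσ.2⟩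

theorem setupCost_lt {y y' : ChangeoverVars P}
    (hcS : ∀ l, ∀ a ∈ P.prods l, ∀ b ∈ P.prods l, 0 < P.cS a b l)
    (hle : ∀ l t, ∀ a ∈ P.prods l, ∀ b ∈ P.prods l, y' a b l t ≤ y a b l t)
    {ℓ : Fin P.m} (s : Fin (P.W ℓ)) {i j : Fin P.n} (hi : i ∈ P.prods ℓ) (hj : j ∈ P.prods ℓ)
    (hlt : y' i j ℓ s < y i j ℓ s) :
    setupCost P y' < setupCost P y := by
  have term_le : ∀ l t, ∀ a ∈ P.prods l, ∀ b ∈ P.prods l,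
      P.cS a b l * y' a b l t ≤ P.cS a b l * y a b l t := fun l t a ha b hb =>
    mul_le_mul_of_nonneg_left (hle l t a ha b hb) (hcS l a ha b hb).le
  refine sum_lt_sum (fun l _ => ?_) ⟨ℓ, mem_univ ℓ, ?_⟩
  · exact sum_le_sum fun a ha => sum_le_sum fun b hb => sum_le_sum fun t _ =>
      term_le l t a ha b hb
  refine sum_lt_sum (fun a ha => ?_) ⟨i, hi, ?_⟩
  · exact sum_le_sum fun b hb => sum_le_sum fun t _ => term_le ℓ t a ha b hb
  refine sum_lt_sum (fun b hb => ?_) ⟨j, hj, ?_⟩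
  · exact sum_le_sum fun t _ => term_le ℓ t i hi b hb
  exact sum_lt_sum (fun t _ => term_le ℓ t i hi j hj)
    ⟨s, mem_univ s, mul_lt_mul_of_pos_left hlt (hcS ℓ i hi j hj)⟩

theorem objective_withY_lt {y : ChangeoverVars P}
    (h : setupCost P y < setupCost P σ.y) : objective P (σ.withY y) < objective P σ := by
  unfold objective
  unfold setupCost at h
  exact add_lt_add_left (add_lt_add_right h _) _

theorem OptimalMk.y_eq_changeoverLB (hopt : OptimalMk P K Xp xhat k σ)
    (hcS : ∀ l, ∀ a ∈ P.prods l, ∀ b ∈ P.prods l, 0 < P.cS a b l)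
    (he : ∀ l, ∀ a ∈ P.prods l, ∀ b ∈ P.prods l, 0 ≤ P.e a b l)
    {ℓ : Fin P.m} (s : Fin (P.W ℓ)) {i j : Fin P.n} (hi : i ∈ P.prods ℓ) (hj : j ∈ P.prods ℓ) :
    σ.y i j ℓ s = changeoverLB σ i j ℓ s := by
  have hle : ∀ l t, ∀ a ∈ P.prods l, ∀ b ∈ P.prods l, changeoverLB σ a b l t ≤ σ.y a b l t :=
    fun l t a ha b hb => hopt.1.1.changeoverLB_le t ha hb
  refine (eq_of_le_of_not_lt (hle ℓ s i hi j hj) fun hlt => ?_).symm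
  have hτ := hopt.1.withY he hle fun _ _ _ _ _ _ => le_rfl
  exact (hopt.2 _ hτ).not_gt (objective_withY_lt (setupCost_lt hcS hle s hi hj hlt))

theorem FeasibleMk.x_binary (hσ : FeasibleMk P K Xp xhat k σ)
    (hbin : ∀ w, w < k → ∀ l, ∀ t : Fin (P.W l), ∀ a ∈ P.prods l, Xp w l t a →
      ((xhat w).x a l (t.val + 1) = 0 ∨ (xhat w).x a l (t.val + 1) = 1))
    {w : Fin K} (hw : w ≤ k) {l : Fin P.m} {t : Fin (P.W l)} {a : Fin P.n}
    (ha : a ∈ P.prods l) (hX : Xp w l t a) :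
    σ.x a l (t.val + 1) = 0 ∨ σ.x a l (t.val + 1) = 1 := by
  rcases hw.lt_or_eq with hw | rfl
  · rw [hσ.2.1 w hw l t a ha hX]
    exact hbin w hw l t a ha hX
  · exact hσ.2.2.1 l t a ha hX

end Changeover

theorem max_zero_add_sub_one_binary {a b : ℝ} (ha : a = 0 ∨ a = 1) (hb : b = 0 ∨ b = 1) :
    max 0 (a + b - 1) = 0 ∨ max 0 (a + b - 1) = 1 := by
  rcases ha with rfl | rfl <;> rcases hb with rfl | rfl <;> norm_num

theorem optimalMk_y_binary_general (P : GLSP) (K : ℕ)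
    (Xp : Fin K → (ℓ : Fin P.m) → Fin (P.W ℓ) → Fin P.n → Prop)
    (k : Fin K) (xhat : Fin K → Sol P)
    (hbin : ∀ w, w < k → ∀ ℓ, ∀ s : Fin (P.W ℓ), ∀ i ∈ P.prods ℓ, Xp w ℓ s i →
      ((xhat w).x i ℓ (s.val + 1) = 0 ∨ (xhat w).x i ℓ (s.val + 1) = 1))
    (hcS : ∀ ℓ, ∀ i ∈ P.prods ℓ, ∀ j ∈ P.prods ℓ, 0 < P.cS i j ℓ)
    (he : ∀ ℓ, ∀ i ∈ P.prods ℓ, ∀ j ∈ P.prods ℓ, 0 ≤ P.e i j ℓ)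
    (ℓ : Fin P.m) (s : Fin (P.W ℓ))
    (i : Fin P.n) (hi : i ∈ P.prods ℓ) (j : Fin P.n) (hj : j ∈ P.prods ℓ)
    (hprev : ∃ s' : Fin (P.W ℓ), (s' : ℕ) + 1 = (s : ℕ) ∧
      ∃ w, w ≤ k ∧ Xp w ℓ s' i)
    (hcur : ∃ w, w ≤ k ∧ Xp w ℓ s j)
    (σ : Sol P) (hopt : OptimalMk P K Xp xhat k σ) :
    σ.y i j ℓ s = max 0 (σ.x i ℓ s.val + σ.x j ℓ (s.val + 1) - 1) ∧
    (σ.y i j ℓ s = 0 ∨ σ.y i j ℓ s = 1) := by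
  obtain ⟨s', hs', w, hw, hXi⟩ := hprev
  obtain ⟨w', hw', hXj⟩ := hcur
  have hy := hopt.y_eq_changeoverLB hcS he s hi hj
  refine ⟨hy, hy ▸ max_zero_add_sub_one_binary ?_ ?_⟩
  · exact hs' ▸ hopt.1.x_binary hbin hw hi hXi
  · exact hopt.1.x_binary hbin hw' hj hXj

/-- Let `X` be partitioned into pairwise disjoint subsets
`X₁, …, X_K` and fix `k`.  Suppose in Model M_k every setup cost `c^S_{ijℓ}`
is strictly positive, every setup time `e_{ijℓ}` is nonnegative, and all the
fixed values `x̂^w` (`w < k`) are binary.  Then for every subperiod `s` of a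
machine `ℓ` and products `i, j ∈ I_ℓ` such that both `(i,ℓ,s-1)` and
`(j,ℓ,s)` belong to `X₁ ∪ … ∪ X_k`, every optimal solution of Model M_k
satisfies `y_{ijℓs} = max 0 (x_{iℓ,s-1} + x_{jℓs} - 1) ∈ {0,1}`.
(Here the subperiod `s : Fin (P.W ℓ)` stands for the paper's subperiod
`s+1`, so `(i,ℓ,s-1)` is the pair formed with the preceding subperiod
`s' : Fin (P.W ℓ)` with `s' + 1 = s`.) -/
theorem optimalMk_y_binary (P : GLSP) (K : ℕ)
    (Xp : Fin K → (ℓ : Fin P.m) → Fin (P.W ℓ) → Fin P.n → Prop)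
    (hcover : ∀ ℓ, ∀ s : Fin (P.W ℓ), ∀ i ∈ P.prods ℓ, ∃ k, Xp k ℓ s i)
    (hdisj : ∀ k₁ k₂, k₁ ≠ k₂ → ∀ ℓ, ∀ s : Fin (P.W ℓ), ∀ i,
      ¬(Xp k₁ ℓ s i ∧ Xp k₂ ℓ s i))
    (k : Fin K) (xhat : Fin K → Sol P)
    (hbin : ∀ w, w < k → ∀ ℓ, ∀ s : Fin (P.W ℓ), ∀ i ∈ P.prods ℓ, Xp w ℓ s i →
      ((xhat w).x i ℓ (s.val + 1) = 0 ∨ (xhat w).x i ℓ (s.val + 1) = 1))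
    (hcS : ∀ ℓ, ∀ i ∈ P.prods ℓ, ∀ j ∈ P.prods ℓ, 0 < P.cS i j ℓ)
    (he : ∀ ℓ, ∀ i ∈ P.prods ℓ, ∀ j ∈ P.prods ℓ, 0 ≤ P.e i j ℓ)
    (ℓ : Fin P.m) (s : Fin (P.W ℓ))
    (i : Fin P.n) (hi : i ∈ P.prods ℓ) (j : Fin P.n) (hj : j ∈ P.prods ℓ)
    (hprev : ∃ s' : Fin (P.W ℓ), (s' : ℕ) + 1 = (s : ℕ) ∧
      ∃ w, w ≤ k ∧ Xp w ℓ s' i)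
    (hcur : ∃ w, w ≤ k ∧ Xp w ℓ s j)
    (σ : Sol P) (hopt : OptimalMk P K Xp xhat k σ) :
    σ.y i j ℓ s = max 0 (σ.x i ℓ s.val + σ.x j ℓ (s.val + 1) - 1) ∧
    (σ.y i j ℓ s = 0 ∨ σ.y i j ℓ s = 1) :=
  optimalMk_y_binary_general P K Xp k xhat hbin hcS he ℓ s i hi j hj hprev hcur σ hopt
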